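/- Let V = Aug(ℂ^n) ⊆ ℂ^n with basis w_i = v_i − v_n for 1 ≤ i ≤ n−1, and set w_n = v_1 + ⋯ + v_n. The linear map ρ: Λ^r(ℂ^n) → Λ^{r−1}(V) defined on the wedge basis of w_1,…,w_n by ρ(w_{i_1} ∧ ⋯ ∧ w_{i_r}) = w_{i_1} ∧ ⋯ ∧ w_{i_{r−1}} if i_r = n and 0 otherwise, is a surjective homomorphism of ℂ[T_n]-modules with kernel Λ^r(V). -/

import Mathlib

open Finset in
/-- The natural representation of the full transformation monoid `Function.End (Fin n)`
on `ℂ^n`, determined by `f · v_i = v_{f i}` on the standard basis. -/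
noncomputable def natRep (n : ℕ) :
    Representation ℂ (Function.End (Fin n)) (Fin n → ℂ) where
  toFun f :=
    { toFun := fun x j => ∑ i, if f i = j then x i else 0
      map_add' := by
        intro x y
        funext j
        simp only [Pi.add_apply]
        rw [← Finset.sum_add_distrib]
        congr 1; funext i; split <;> simp
      map_smul' := by
        intro c x
        funext j
        simp [Finset.mul_sum, apply_ite (fun t => c * t)] }
  map_one' := by
    refine LinearMap.ext fun x => funext fun j => ?_
    show (∑ i, if (1 : Function.End (Fin n)) i = j then x i else 0) = x j
    have h : ∀ i : Fin n, (1 : Function.End (Fin n)) i = i := fun _ => rfl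
    simp only [h]
    rw [Finset.sum_ite_eq' Finset.univ j x]
    simp
  map_mul' := by
    intro f g
    refine LinearMap.ext fun x => funext fun j => ?_
    show (∑ i, if f (g i) = j then x i else 0)
        = ∑ k, if f k = j then ∑ i, if g i = k then x i else 0 else 0
    have key : ∀ k, (if f k = j then ∑ i, if g i = k then x i else 0 else 0)
        = ∑ i, if g i = k then (if f k = j then x i else 0) else 0 := by
      intro k; split
      · rfl
      · simp
    rw [Finset.sum_congr rfl (fun k _ => key k), Finset.sum_comm]
    refine Finset.sum_congr rfl fun i _ => ?_
    rw [Finset.sum_ite_eq Finset.univ (g i) (fun k => if f k = j then x i else 0)]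
    simp

lemma sum_natRep (n : ℕ) (f : Function.End (Fin n)) (x : Fin n → ℂ) :
    ∑ j, natRep n f x j = ∑ i, x i := by
  show ∑ j, ∑ i, (if f i = j then x i else 0) = _
  rw [Finset.sum_comm]
  simp [Finset.sum_ite_eq' Finset.univ]

/-- The augmentation submodule `Aug(ℂ^n)` of the natural module: vectors whose
coordinates sum to zero. -/
noncomputable def Aug (n : ℕ) : Submodule ℂ (Fin n → ℂ) where
  carrier := {x | ∑ i, x i = 0}
  add_mem' := by intro a b ha hb; simp_all [Finset.sum_add_distrib]
  zero_mem' := by simp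
  smul_mem' := by intro c a ha; simp_all [← Finset.mul_sum]

lemma natRep_mem_aug (n : ℕ) (f : Function.End (Fin n)) {x : Fin n → ℂ}
    (hx : x ∈ Aug n) : natRep n f x ∈ Aug n := by
  have : ∑ j, natRep n f x j = 0 := by rw [sum_natRep]; exact hx
  exact this

/-- The representation of the full transformation monoid on the augmentation submodule. -/
noncomputable def augRep (n : ℕ) : Representation ℂ (Function.End (Fin n)) (Aug n) where
  toFun f := (natRep n f).restrict (p := Aug n) (q := Aug n) (fun _ hx => natRep_mem_aug n f hx)
  map_one' := by
    refine LinearMap.ext fun x => Subtype.ext ?_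
    simp [LinearMap.restrict_apply]
  map_mul' := by
    intro f g
    refine LinearMap.ext fun x => Subtype.ext ?_
    simp [LinearMap.restrict_apply]

lemma extAlg_map_mem {R M N : Type} [CommRing R] [AddCommGroup M] [Module R M]
    [AddCommGroup N] [Module R N] (r : ℕ) (f : M →ₗ[R] N) {x : ExteriorAlgebra R M}
    (hx : x ∈ ⋀[R]^r M) : ExteriorAlgebra.map f x ∈ ⋀[R]^r N := by
  rw [← ExteriorAlgebra.ιMulti_span_fixedDegree] at hx ⊢
  induction hx using Submodule.span_induction with
  | mem y hy =>
      obtain ⟨v, rfl⟩ := hy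
      rw [ExteriorAlgebra.map_apply_ιMulti]
      exact Submodule.subset_span ⟨f ∘ v, rfl⟩
  | zero => simp
  | add y z _ _ hy hz => rw [map_add]; exact Submodule.add_mem _ hy hz
  | smul c y _ hy => rw [map_smul]; exact Submodule.smul_mem _ c hy

/-- The linear map between `r`-th exterior powers induced by a linear map. -/
noncomputable def extMap {R M N : Type} [CommRing R] [AddCommGroup M] [Module R M]
    [AddCommGroup N] [Module R N] (r : ℕ) (f : M →ₗ[R] N) :
    ⋀[R]^r M →ₗ[R] ⋀[R]^r N :=
  (ExteriorAlgebra.map f).toLinearMap.restrict (p := ⋀[R]^r M) (q := ⋀[R]^r N)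
    (fun _ hx => extAlg_map_mem r f hx)

/-- The representation of the full transformation monoid on the `r`-th exterior power
of the natural module, by the diagonal action on wedge products. -/
noncomputable def extRep (n r : ℕ) :
    Representation ℂ (Function.End (Fin n)) (⋀[ℂ]^r (Fin n → ℂ)) where
  toFun f := extMap r (natRep n f)
  map_one' := by
    refine LinearMap.ext fun x => Subtype.ext ?_
    simp [extMap, LinearMap.restrict_apply, map_one, Module.End.one_eq_id,
      ExteriorAlgebra.map_id]
  map_mul' := by
    intro f g
    refine LinearMap.ext fun x => Subtype.ext ?_
    simp only [extMap, LinearMap.restrict_apply, map_mul, Module.End.mul_eq_comp,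
      ← ExteriorAlgebra.map_comp_map]
    rfl

set_option synthInstance.maxHeartbeats 1000000 in
/-- The representation of the full transformation monoid on the `r`-th exterior power
of the augmentation submodule. -/
noncomputable def extAugRep (n r : ℕ) :
    Representation ℂ (Function.End (Fin n)) (⋀[ℂ]^r ↥(Aug n)) where
  toFun f := extMap r (augRep n f)
  map_one' := by
    refine LinearMap.ext fun x => Subtype.ext ?_
    simp [extMap, LinearMap.restrict_apply, map_one, Module.End.one_eq_id,
      ExteriorAlgebra.map_id]
  map_mul' := by
    intro f g
    refine LinearMap.ext fun x => Subtype.ext ?_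
    simp only [extMap, LinearMap.restrict_apply, map_mul, Module.End.mul_eq_comp,
      ← ExteriorAlgebra.map_comp_map]
    rfl

/-- The idempotent `e_m ∈ T_n` fixing the first `m` points and sending all other
points to the first point. -/
def eIdem (n m : ℕ) : Function.End (Fin n) :=
  fun i => if h : (i : ℕ) < m then i else ⟨0, i.pos⟩

/-- The embedding of the symmetric group `S_r` into `T_n` as the maximal subgroup
at the idempotent `eIdem n r` (elements `g` with `e g e = g` invertible in `e T_n e`). -/
def permEmbed (n r : ℕ) (hr : 1 ≤ r) (hrn : r ≤ n) (σ : Equiv.Perm (Fin r)) :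
    Function.End (Fin n) :=
  fun i => Fin.castLE hrn (σ (if hi : (i : ℕ) < r then ⟨i, hi⟩ else ⟨0, hr⟩))

/-- The idempotent `η = (1/r!) ∑_{g ∈ G} sgn(g|_{[r]}) g` of the monoid algebra,
where `G ≅ S_r` is the maximal subgroup at `eIdem n r`. -/
noncomputable def eta (n r : ℕ) (hr : 1 ≤ r) (hrn : r ≤ n) :
    MonoidAlgebra ℂ (Function.End (Fin n)) :=
  (r.factorial : ℂ)⁻¹ • ∑ σ : Equiv.Perm (Fin r),
    MonoidAlgebra.single (permEmbed n r hr hrn σ) ((Equiv.Perm.sign σ : ℤ) : ℂ)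

/-- A permutation of `Fin m`, viewed as an element of the transformation monoid. -/
def permToEnd (m : ℕ) : Equiv.Perm (Fin m) →* Function.End (Fin m) where
  toFun σ := ⇑σ
  map_one' := rfl
  map_mul' := fun _ _ => rfl

/-- The wedge product of a family of `r` vectors, as an element of the `r`-th
exterior power. -/
noncomputable def wedge {M : Type} [AddCommGroup M] [Module ℂ M] (r : ℕ) (v : Fin r → M) :
    ⋀[ℂ]^r M :=
  ⟨ExteriorAlgebra.ιMulti ℂ r v, ExteriorAlgebra.ιMulti_range ℂ r ⟨v, rfl⟩⟩

/-- The basis `w_1, …, w_n` of `ℂ^n`: `w_i = v_i - v_n` for `i < n` and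
`w_n = v_1 + ⋯ + v_n`. -/
noncomputable def wBasis (n : ℕ) : Fin n → (Fin n → ℂ) :=
  fun i => if h : (i : ℕ) < n - 1
    then Pi.single i 1 - Pi.single (⟨n - 1, by omega⟩ : Fin n) 1
    else ∑ j, Pi.single j 1

lemma wBasis_mem_aug (n : ℕ) (i : Fin n) (h : (i : ℕ) < n - 1) : wBasis n i ∈ Aug n := by
  show ∑ j, wBasis n i j = 0
  simp [wBasis, h, Finset.sum_sub_distrib, Finset.sum_pi_single]

/-- The vectors `w_i = v_i - v_n` (for `i < n`) as elements of the augmentation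
submodule; junk value `0` otherwise. -/
noncomputable def wAug (n : ℕ) : Fin n → ↥(Aug n) :=
  fun i => if h : (i : ℕ) < n - 1 then ⟨wBasis n i, wBasis_mem_aug n i h⟩ else 0

/-- The trivial representation of the full transformation monoid on `ℂ`. -/
noncomputable def trivRep (n : ℕ) : Representation ℂ (Function.End (Fin n)) ℂ := 1

/-- `projDimLE R M k` : the `R`-module `M` admits a projective resolution of length
at most `k`, i.e. has projective dimension at most `k`. -/
def projDimLE (R : Type) [Ring R] (M : Type) [AddCommMonoid M] [Module R M] (k : ℕ) : Prop :=
  ∃ (P : ℕ → ModuleCat.{0} R) (d : (i : ℕ) → (P (i + 1) →ₗ[R] P i)) (π : P 0 →ₗ[R] M),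
    (∀ i, Module.Projective R (P i)) ∧
    Function.Surjective π ∧
    LinearMap.ker π = LinearMap.range (d 0) ∧
    (∀ i, LinearMap.ker (d i) = LinearMap.range (d (i + 1))) ∧
    (∀ i, k < i → Subsingleton (P i))

/-- The sign character of `S_n`, extended by zero to all of `T_n`. -/
noncomputable def sgnExt (n : ℕ) (f : Function.End (Fin n)) : ℂ :=
  @dite _ (Function.Bijective f) (Fintype.decidableBijectiveFintype (f : Fin n → Fin n))
    (fun h => ((Equiv.Perm.sign (Equiv.ofBijective f h) : ℤ) : ℂ)) (fun _ => 0)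

/-!
Let `λ x = (1/n) ∑ xᵢ` and `𝟙 = w_n`. Then `λ 𝟙 = 1` and `λ` vanishes on `V`, so `ℂⁿ = V ⊕ ℂ𝟙`;
let `p : ℂⁿ → V` be the projection along `𝟙`. The map `ρ` is `x ↦ Λp (x ⌊ λ)`, right contraction
with `λ` followed by `Λp`. Every `x ∈ Λℂⁿ` decomposes as `x = Λp x + ρ x ∧ 𝟙`, while `ρ` kills `ΛV`
and `ρ (y ∧ 𝟙) = y` for `y ∈ ΛV`: this gives the wedge-basis formula, surjectivity and the kernel.
Each `f ∈ T_n` preserves `V` and `λ`, so `f 𝟙 = 𝟙 + v` with `v ∈ V`; applying `f` to the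
decomposition of `x` and then `ρ` shows `ρ (f x) = f (ρ x)`.
-/

namespace ExteriorAlgebra

open CliffordAlgebra (contractRight contractRight_mul_ι contractRight_algebraMap)

section Algebra

variable {R M N : Type*} [CommRing R] [AddCommGroup M] [Module R M] [AddCommGroup N] [Module R N]

theorem map_comp_apply {P : Type*} [AddCommGroup P] [Module R P] (f : M →ₗ[R] N)
    (g : N →ₗ[R] P) (x : ExteriorAlgebra R M) : map (g ∘ₗ f) x = map g (map f x) := by
  rw [← map_comp_map]; rfl

theorem ιMulti_succ_eq_mul_ι {k : ℕ} (v : Fin (k + 1) → M) :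
    ιMulti R (k + 1) v = ιMulti R k (fun j => v j.castSucc) * ι R (v (Fin.last k)) := by
  rw [ιMulti_apply, ιMulti_apply, List.ofFn_succ', List.concat_eq_append, List.prod_append,
    List.prod_singleton]

theorem mul_ι_mem_exteriorPower {k : ℕ} {x : ExteriorAlgebra R M} (hx : x ∈ ⋀[R]^k M) (m : M) :
    x * ι R m ∈ ⋀[R]^(k + 1) M := by
  rw [exteriorPower, pow_succ]
  exact Submodule.mul_mem_mul hx (LinearMap.mem_range_self _ m)

theorem contractRight_mem_exteriorPower (d : Module.Dual R M) {k : ℕ} {x : ExteriorAlgebra R M}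
    (hx : x ∈ ⋀[R]^(k + 1) M) : contractRight x d ∈ ⋀[R]^k M := by
  induction k generalizing x with
  | zero =>
    rw [zero_add, exteriorPower, pow_one] at hx
    obtain ⟨m, rfl⟩ := hx
    rw [CliffordAlgebra.contractRight_ι, exteriorPower, pow_zero]
    exact Submodule.algebraMap_mem _
  | succ k ih =>
    rw [exteriorPower, pow_succ] at hx
    induction hx using Submodule.mul_induction_on' with
    | mem_mul_mem a ha b hb =>
      obtain ⟨m, rfl⟩ := hb
      rw [contractRight_mul_ι]
      exact sub_mem (Submodule.smul_mem _ _ ha) (mul_ι_mem_exteriorPower (ih ha) m)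
    | add a _ b _ ha hb => rw [map_add, LinearMap.add_apply]; exact add_mem ha hb

theorem contractRight_map (g : M →ₗ[R] N) (d : Module.Dual R N) (x : ExteriorAlgebra R M) :
    contractRight (map g x) d = map g (contractRight x (d ∘ₗ g)) := by
  induction x using CliffordAlgebra.right_induction with
  | algebraMap c => rw [AlgHom.commutes, contractRight_algebraMap, contractRight_algebraMap,
      map_zero]
  | add x y hx hy => simp only [map_add, LinearMap.add_apply, hx, hy]
  | mul_ι m x hx =>
    rw [map_mul, map_apply_ι, contractRight_mul_ι, contractRight_mul_ι, map_sub, map_smul, hx,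
      map_mul, map_apply_ι, LinearMap.comp_apply]

theorem map_add_smulRight (g : M →ₗ[R] N) (d : Module.Dual R M) (z : N)
    (x : ExteriorAlgebra R M) :
    map (g + d.smulRight z) x = map g x + map g (contractRight x d) * ι R z := by
  induction x using CliffordAlgebra.right_induction with
  | algebraMap c =>
    rw [AlgHom.commutes, AlgHom.commutes, contractRight_algebraMap, map_zero, zero_mul, add_zero]
  | add x y hx hy =>
    rw [map_add, map_add, hx, hy, map_add, LinearMap.add_apply, map_add, add_mul]
    abel
  | mul_ι m x hx =>
    have hzz : ι R z * ι R z = 0 := ι_sq_zero z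
    have hzg : ι R z * ι R (g m) = -(ι R (g m) * ι R z) :=
      eq_neg_of_add_eq_zero_left (ι_add_mul_swap z (g m))
    rw [map_mul, map_mul, map_apply_ι, map_apply_ι, hx, contractRight_mul_ι, map_sub, map_smul,
      map_mul, map_apply_ι, LinearMap.add_apply, LinearMap.smulRight_apply, map_add, map_smul]
    simp only [mul_add, add_mul, sub_mul, mul_assoc, mul_smul_comm, smul_mul_assoc, hzz, hzg,
      mul_zero, add_zero, mul_neg]
    abel

variable {i : N →ₗ[R] M} {p : M →ₗ[R] N} {d : Module.Dual R M} {u : M}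

variable (p d) in
noncomputable def mapContractRight : ExteriorAlgebra R M →ₗ[R] ExteriorAlgebra R N :=
  (map p).toLinearMap ∘ₗ (contractRight (Q := 0)).flip d

theorem mapContractRight_apply (x : ExteriorAlgebra R M) :
    mapContractRight p d x = map p (contractRight x d) := rfl

theorem mapContractRight_map_eq_zero (hdi : d ∘ₗ i = 0) (y : ExteriorAlgebra R N) :
    mapContractRight p d (map i y) = 0 := by
  rw [mapContractRight_apply, contractRight_map, hdi, map_zero, map_zero, map_zero]

theorem mapContractRight_map_mul_ι (hpi : p ∘ₗ i = LinearMap.id) (hdi : d ∘ₗ i = 0)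
    (hdu : d u = 1) (y : ExteriorAlgebra R N) :
    mapContractRight p d (map i y * ι R u) = y := by
  rw [mapContractRight_apply, contractRight_mul_ι, contractRight_map, hdi, map_zero, map_zero,
    zero_mul, sub_zero, hdu, one_smul, ← map_comp_apply, hpi, map_id, AlgHom.id_apply]

theorem map_map_add_map_mapContractRight_mul_ι (hip : i ∘ₗ p = LinearMap.id - d.smulRight u)
    (x : ExteriorAlgebra R M) :
    map i (map p x) + map i (mapContractRight p d x) * ι R u = x := by
  rw [mapContractRight_apply, ← map_comp_apply, ← map_comp_apply, ← map_add_smulRight, hip,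
    sub_add_cancel, map_id, AlgHom.id_apply]

theorem mapContractRight_map (hpi : p ∘ₗ i = LinearMap.id) (hdi : d ∘ₗ i = 0)
    (hip : i ∘ₗ p = LinearMap.id - d.smulRight u) (hdu : d u = 1)
    {g : M →ₗ[R] M} {h : N →ₗ[R] N} (hgi : g ∘ₗ i = i ∘ₗ h) (hgu : d (g u) = 1)
    (x : ExteriorAlgebra R M) :
    mapContractRight p d (map g x) = map h (mapContractRight p d x) := by
  -- `g` moves `u` only by an element of `i N`, which the contraction ignores.
  have hg_u : g u = u + i (p (g u)) := by
    rw [← LinearMap.comp_apply i p, hip]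
    simp [hgu]
  have hgi' : ∀ y, map g (map i y) = map i (map h y) := fun y => by
    rw [← map_comp_apply, hgi, map_comp_apply]
  conv_lhs => rw [← map_map_add_map_mapContractRight_mul_ι hip x]
  rw [map_add, map_mul, map_apply_ι, hgi', hgi', hg_u, map_add (ι R), mul_add, ← map_apply_ι i,
    ← map_mul, add_left_comm, ← map_add (map i), map_add, mapContractRight_map_eq_zero hdi,
    add_zero, mapContractRight_map_mul_ι hpi hdi hdu]

end Algebra

section Graded

variable {R M N : Type} [CommRing R] [AddCommGroup M] [Module R M] [AddCommGroup N] [Module R N]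
  {i : N →ₗ[R] M} {p : M →ₗ[R] N} {d : Module.Dual R M} {u : M}

variable (p d) in
noncomputable def exteriorPowerMapContractRight (k : ℕ) : ⋀[R]^(k + 1) M →ₗ[R] ⋀[R]^k N :=
  (mapContractRight p d).restrict fun _ hx =>
    extAlg_map_mem k p (contractRight_mem_exteriorPower d hx)

theorem exteriorPowerMapContractRight_surjective (hpi : p ∘ₗ i = LinearMap.id) (hdi : d ∘ₗ i = 0)
    (hdu : d u = 1) (k : ℕ) : Function.Surjective (exteriorPowerMapContractRight p d k) := by
  rintro ⟨y, hy⟩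
  exact ⟨⟨map i y * ι R u, mul_ι_mem_exteriorPower (extAlg_map_mem k i hy) u⟩,
    Subtype.ext (mapContractRight_map_mul_ι hpi hdi hdu y)⟩

theorem ker_exteriorPowerMapContractRight (hdi : d ∘ₗ i = 0)
    (hip : i ∘ₗ p = LinearMap.id - d.smulRight u) (k : ℕ) :
    LinearMap.ker (exteriorPowerMapContractRight p d k) = LinearMap.range (extMap (k + 1) i) := by
  ext x
  rw [LinearMap.mem_ker, LinearMap.mem_range]
  constructor
  · intro h0
    have hx0 : mapContractRight p d x = 0 := congr(Subtype.val $h0)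
    refine ⟨⟨map p x, extAlg_map_mem _ p x.2⟩, Subtype.ext ?_⟩
    show map i (map p x) = x
    simpa [hx0] using map_map_add_map_mapContractRight_mul_ι hip x.1
  · rintro ⟨y, rfl⟩
    exact Subtype.ext (mapContractRight_map_eq_zero hdi y.1)

theorem exteriorPowerMapContractRight_comp_extMap (hpi : p ∘ₗ i = LinearMap.id) (hdi : d ∘ₗ i = 0)
    (hip : i ∘ₗ p = LinearMap.id - d.smulRight u) (hdu : d u = 1)
    {g : M →ₗ[R] M} {h : N →ₗ[R] N} (hgi : g ∘ₗ i = i ∘ₗ h) (hgu : d (g u) = 1) (k : ℕ) :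
    (exteriorPowerMapContractRight p d k).comp (extMap (k + 1) g) =
      (extMap k h).comp (exteriorPowerMapContractRight p d k) :=
  LinearMap.ext fun x => Subtype.ext (mapContractRight_map hpi hdi hip hdu hgi hgu x.1)

end Graded

end ExteriorAlgebra

open ExteriorAlgebra

section Augmentation

variable {n : ℕ}

theorem mem_aug_iff {x : Fin n → ℂ} : x ∈ Aug n ↔ ∑ i, x i = 0 := Iff.rfl

noncomputable def augFunctional (n : ℕ) : Module.Dual ℂ (Fin n → ℂ) :=
  (n : ℂ)⁻¹ • ∑ i, LinearMap.proj i

theorem augFunctional_apply (x : Fin n → ℂ) : augFunctional n x = (n : ℂ)⁻¹ * ∑ i, x i := by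
  simp [augFunctional]

theorem augFunctional_one (hn : n ≠ 0) : augFunctional n 1 = 1 := by
  simp [augFunctional_apply, hn]

theorem augFunctional_natRep (f : Function.End (Fin n)) (x : Fin n → ℂ) :
    augFunctional n (natRep n f x) = augFunctional n x := by
  rw [augFunctional_apply, augFunctional_apply, sum_natRep]

theorem augFunctional_comp_subtype : augFunctional n ∘ₗ (Aug n).subtype = 0 := by
  ext x
  simp [augFunctional_apply, mem_aug_iff.mp x.2]

noncomputable def augProj (n : ℕ) : (Fin n → ℂ) →ₗ[ℂ] Aug n :=
  (LinearMap.id - (augFunctional n).smulRight 1).codRestrict (Aug n) fun x => by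
    rcases eq_or_ne n 0 with rfl | hn
    · simp [mem_aug_iff]
    · simp [mem_aug_iff, Finset.sum_sub_distrib, augFunctional_apply, hn]

theorem subtype_comp_augProj :
    (Aug n).subtype ∘ₗ augProj n = LinearMap.id - (augFunctional n).smulRight 1 :=
  LinearMap.subtype_comp_codRestrict _ _ _

theorem augProj_comp_subtype : augProj n ∘ₗ (Aug n).subtype = LinearMap.id := by
  ext x : 2
  simp [augProj, augFunctional_apply, mem_aug_iff.mp x.2]

theorem wBasis_eq_wAug {i : Fin n} (h : (i : ℕ) < n - 1) : wBasis n i = wAug n i := by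
  simp [wAug, h]

theorem wBasis_eq_one {i : Fin n} (h : ¬ (i : ℕ) < n - 1) : wBasis n i = 1 := by
  funext k
  simp [wBasis, h, Finset.sum_apply, Pi.single_apply]

theorem exteriorPowerMapContractRight_wedge_wBasis (hn : n ≠ 0) {k : ℕ} {idx : Fin (k + 1) → Fin n}
    (hidx : StrictMono idx) :
    exteriorPowerMapContractRight (augProj n) (augFunctional n) k (wedge (k + 1) (wBasis n ∘ idx)) =
      if (idx (Fin.last k) : ℕ) = n - 1 then wedge k (fun j => wAug n (idx j.castSucc))
      else 0 := by
  apply Subtype.ext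
  split_ifs with hlast
  · have hlt (j : Fin k) : (idx j.castSucc : ℕ) < n - 1 :=
      hlast ▸ hidx (Fin.castSucc_lt_last j)
    have hv : ιMulti ℂ (k + 1) (wBasis n ∘ idx) =
        map (Aug n).subtype (ιMulti ℂ k fun j => wAug n (idx j.castSucc)) * ι ℂ 1 := by
      rw [ιMulti_succ_eq_mul_ι, map_apply_ιMulti, Function.comp_apply,
        wBasis_eq_one (by omega)]
      congr 2
      funext j
      exact wBasis_eq_wAug (hlt j)
    exact congr(mapContractRight _ _ $hv).trans <| mapContractRight_map_mul_ι
      augProj_comp_subtype augFunctional_comp_subtype (augFunctional_one hn) _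
  · have hlt (j : Fin (k + 1)) : (idx j : ℕ) < n - 1 :=
      lt_of_le_of_lt (hidx.monotone (Fin.le_last j)) (by omega)
    have hv : ιMulti ℂ (k + 1) (wBasis n ∘ idx) =
        map (Aug n).subtype (ιMulti ℂ (k + 1) (wAug n ∘ idx)) := by
      rw [map_apply_ιMulti]
      congr 1
      funext j
      exact wBasis_eq_wAug (hlt j)
    exact congr(mapContractRight _ _ $hv).trans <|
      mapContractRight_map_eq_zero augFunctional_comp_subtype _

end Augmentation

/-- Let `w_i = v_i − v_n` (for `i < n`) and `w_n = v_1 + ⋯ + v_n`, a basis of `ℂ^n`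
whose first `n−1` members form a basis of `V = Aug(ℂ^n)`. The linear map
`ρ : Λ^r(ℂ^n) → Λ^{r−1}(V)` defined on the wedge basis by
`ρ(w_{i_1} ∧ ⋯ ∧ w_{i_r}) = w_{i_1} ∧ ⋯ ∧ w_{i_{r−1}}` if `i_r = n` and `0`
otherwise, is a surjective homomorphism of `ℂ[T_n]`-modules (i.e. `T_n`-equivariant)
with kernel `Λ^r(V)` (the image of the inclusion induced by `V ⊆ ℂ^n`). -/
theorem wedge_basis_projection (n r : ℕ) (hr : 1 ≤ r) (hrn : r ≤ n) :
    ∃ ρ : ↥(⋀[ℂ]^r (Fin n → ℂ)) →ₗ[ℂ] ↥(⋀[ℂ]^(r-1) ↥(Aug n)),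
      (∀ idx : Fin r → Fin n, StrictMono idx →
        ρ (wedge r (fun j => wBasis n (idx j))) =
          if ((idx ⟨r - 1, by omega⟩ : Fin n) : ℕ) = n - 1
          then wedge (r-1) (fun j : Fin (r-1) => wAug n (idx ⟨(j : ℕ), by omega⟩))
          else 0) ∧
      Function.Surjective ρ ∧
      LinearMap.ker ρ = LinearMap.range (extMap r (Aug n).subtype) ∧
      (∀ f : Function.End (Fin n),
        ρ.comp (extRep n r f) = (extAugRep n (r-1) f).comp ρ) := by
  obtain ⟨k, rfl⟩ : ∃ k, r = k + 1 := ⟨r - 1, by omega⟩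
  have hn : n ≠ 0 := by omega
  have hpi := augProj_comp_subtype (n := n)
  have hdi := augFunctional_comp_subtype (n := n)
  have hip := subtype_comp_augProj (n := n)
  have hdu := augFunctional_one hn
  refine ⟨exteriorPowerMapContractRight (augProj n) (augFunctional n) k,
    fun idx hidx => exteriorPowerMapContractRight_wedge_wBasis hn hidx,
    exteriorPowerMapContractRight_surjective hpi hdi hdu k,
    ker_exteriorPowerMapContractRight hdi hip k,
    fun f => exteriorPowerMapContractRight_comp_extMap hpi hdi hip hdu (g := natRep n f)
      (h := augRep n f) rfl (by rw [augFunctional_natRep, hdu]) k⟩
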